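/- arXiv:math/0410357 — 3 statements merged into one kernel-verified Lean document; each statement's English description precedes it below -/
import Mathlib

section
/- If C is a π-system in a root system R (i.e., a linearly independent set of roots such that the difference of any two elements of C is not a root), then the set [C] of roots of R that are integer linear combinations of elements of C is itself a root system (in the span of C) having C as a base. -/
open scoped RealInnerProductSpace

variable {V : Type*} [NormedAddCommGroup V] [InnerProductSpace ℝ V] [FiniteDimensional ℝ V]

/-- A (reduced, crystallographic) root system in the span of `R`. -/
def IsRootSystemIn (R : Set V) : Prop :=
  R.Finite ∧ (0 : V) ∉ R ∧
  (∀ α ∈ R, ∀ β ∈ R, β - (2 * ⟪β, α⟫ / ⟪α, α⟫) • α ∈ R) ∧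
  (∀ α ∈ R, ∀ β ∈ R, ∃ k : ℤ, 2 * ⟪β, α⟫ / ⟪α, α⟫ = (k : ℝ)) ∧
  (∀ α ∈ R, ∀ t : ℝ, t • α ∈ R → t = 1 ∨ t = -1)

/-- A root system in the ambient space `V`. -/
def IsRootSystem (R : Set V) : Prop :=
  IsRootSystemIn R ∧ Submodule.span ℝ R = ⊤

/-- `B` is a base of the root system `R`: a linearly independent subset spanning the span
of `R` such that every root is a `ℤ`-linear combination of `B` with coefficients
all nonnegative or all nonpositive. -/
def IsBaseOf (R B : Set V) : Prop :=
  B ⊆ R ∧ LinearIndependent ℝ ((↑) : B → V) ∧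
  Submodule.span ℝ B = Submodule.span ℝ R ∧
  ∀ r ∈ R, ∃ c : V →₀ ℤ, (c.support : Set V) ⊆ B ∧
    r = c.sum (fun v n => n • v) ∧ ((∀ v, 0 ≤ c v) ∨ (∀ v, c v ≤ 0))

/-- A π-system in `R`: a linearly independent set of roots whose pairwise
differences are not roots. -/
def IsPiSystemIn (R C : Set V) : Prop :=
  C ⊆ R ∧ LinearIndependent ℝ ((↑) : C → V) ∧
  ∀ α ∈ C, ∀ β ∈ C, α - β ∉ R

/-- `[C]`: the set of roots of `R` that are `ℤ`-linear combinations of elements of `C`. -/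
def zClosure (R C : Set V) : Set V :=
  {r ∈ R | r ∈ (Submodule.span ℤ C : Set V)}

/-!
A π-system is pairwise obtuse, since `⟪α, β⟫ > 0` makes `α - β` a root. Reflections act on
`[C]` by integral translations, so `[C]` inherits the root system axioms from `R`; the content is
that a root `r = ∑ cᵥ v` in the `ℤ`-span of `C` has coefficients of one sign. Take a mixed `c`
with `∑ |cᵥ|` minimal and split it into positive and negative parts `p - q`. Obtuseness gives
`⟪p, q⟫ ≤ 0`, hence `⟪r, p⟫ > 0` and `⟪r, q⟫ < 0`, so `⟪r, i⟫ > 0` for some `i` with `cᵢ > 0`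
and `⟪r, j⟫ < 0` for some `j` with `cⱼ < 0`. Then `r - i` and `r + j` are smaller roots that
still have a negative, resp. positive, coefficient, so by minimality they are nonpositive, resp.
nonnegative. This forces `r = i - j`, which is not a root.
-/

section

omit [FiniteDimensional ℝ V]

namespace IsRootSystemIn

variable {R : Set V}

lemma ne_zero (hR : IsRootSystemIn R) {α : V} (hα : α ∈ R) : α ≠ 0 :=
  fun h => hR.2.1 (h ▸ hα)

lemma inner_self_pos (hR : IsRootSystemIn R) {α : V} (hα : α ∈ R) : 0 < ⟪α, α⟫ :=
  real_inner_self_pos.mpr (hR.ne_zero hα)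

lemma neg_mem (hR : IsRootSystemIn R) {α : V} (hα : α ∈ R) : -α ∈ R := by
  have h := hR.2.2.1 α hα α hα
  rwa [mul_div_assoc, div_self (hR.inner_self_pos hα).ne', mul_one, two_smul,
    sub_add_cancel_left] at h

lemma sub_mem_of_inner_self_le (hR : IsRootSystemIn R) {α β : V} (hα : α ∈ R) (hβ : β ∈ R)
    (hpos : 0 < ⟪α, β⟫) (hne : α ≠ β) (hle : ⟪α, α⟫ ≤ ⟪β, β⟫) : α - β ∈ R := by
  have hββ := hR.inner_self_pos hβ
  obtain ⟨k, hk⟩ := hR.2.2.2.1 β hβ α hα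
  -- `⟪α, β⟫ ≥ ⟪β, β⟫ ≥ ⟪α, α⟫` would force `‖α - β‖² ≤ 0`
  have hlt : ⟪α, β⟫ < ⟪β, β⟫ := by
    by_contra! hge
    have : ⟪α - β, α - β⟫ ≤ 0 := by rw [real_inner_sub_sub_self]; linarith
    exact hne (sub_eq_zero.mp (real_inner_self_nonpos.mp this))
  have hk1 : k = 1 := by
    have h0 : (0 : ℝ) < k := hk ▸ by positivity
    have h2 : (k : ℝ) < 2 := hk ▸ (div_lt_iff₀ hββ).mpr (by linarith)
    have : 0 < k ∧ k < 2 := ⟨by exact_mod_cast h0, by exact_mod_cast h2⟩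
    omega
  have h := hR.2.2.1 β hβ α hα
  rwa [hk, hk1, Int.cast_one, one_smul] at h

lemma sub_mem_of_inner_pos (hR : IsRootSystemIn R) {α β : V} (hα : α ∈ R) (hβ : β ∈ R)
    (hpos : 0 < ⟪α, β⟫) (hne : α ≠ β) : α - β ∈ R := by
  rcases le_total ⟪α, α⟫ ⟪β, β⟫ with hle | hle
  · exact hR.sub_mem_of_inner_self_le hα hβ hpos hne hle
  · simpa using hR.neg_mem <|
      hR.sub_mem_of_inner_self_le hβ hα (real_inner_comm α β ▸ hpos) hne.symm hle

lemma zClosure (hR : IsRootSystemIn R) (C : Set V) : IsRootSystemIn (zClosure R C) := by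
  refine ⟨hR.1.subset fun _ h => h.1, fun h => hR.2.1 h.1, fun α hα β hβ => ?_,
    fun α hα β hβ => hR.2.2.2.1 α hα.1 β hβ.1, fun α hα t ht => hR.2.2.2.2 α hα.1 t ht.1⟩
  obtain ⟨k, hk⟩ := hR.2.2.2.1 α hα.1 β hβ.1
  refine ⟨hR.2.2.1 α hα.1 β hβ.1, ?_⟩
  rw [hk, Int.cast_smul_eq_zsmul]
  exact sub_mem hβ.2 (Submodule.smul_mem _ k hα.2)

end IsRootSystemIn

open Finsupp

lemma inner_linearCombination_int_left (c : V →₀ ℤ) (w : V) :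
    ⟪linearCombination ℤ id c, w⟫ = c.sum fun v n => (n : ℝ) * ⟪v, w⟫ := by
  simp only [linearCombination_apply, Finsupp.sum, sum_inner, id, ← Int.cast_smul_eq_zsmul ℝ,
    real_inner_smul_left]

lemma exists_pos_coeff_inner_linearCombination_pos {S : Set V} (hS : LinearIndepOn ℤ id S)
    (hobtuse : ∀ u ∈ S, ∀ v ∈ S, u ≠ v → ⟪u, v⟫ ≤ 0) {c : V →₀ ℤ} (hc : ↑c.support ⊆ S)
    {i₀ : V} (hi₀ : 0 < c i₀) : ∃ i, 0 < c i ∧ 0 < ⟪linearCombination ℤ id c, i⟫ := by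
  classical
  set p := c.filter (fun v => 0 < c v)
  set n := c.filter (fun v => ¬ 0 < c v)
  have hpn : p + n = c := filter_add_filter_not c _
  have mem_p {u : V} (hu : u ∈ p.support) : u ∈ S ∧ 0 < c u ∧ p u = c u := by
    obtain ⟨hu, hpos⟩ := Finset.mem_filter.mp hu
    exact ⟨hc hu, hpos, if_pos hpos⟩
  have mem_n {v : V} (hv : v ∈ n.support) : v ∈ S ∧ c v < 0 ∧ n v = c v := by
    obtain ⟨hv, hneg⟩ := Finset.mem_filter.mp hv
    exact ⟨hc hv, by have := mem_support_iff.mp hv; omega, if_pos hneg⟩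
  have hp : linearCombination ℤ id p ≠ 0 := fun h => by
    have hp0 := linearIndepOn_iff.mp hS p (fun v hv => (mem_p hv).1) h
    have : p i₀ = c i₀ := if_pos hi₀
    rw [hp0, coe_zero, Pi.zero_apply] at this
    omega
  -- the positive and negative parts of `c` live on disjoint subsets of the obtuse set `S`
  have hpn_inner : 0 ≤ ⟪linearCombination ℤ id p, linearCombination ℤ id n⟫ := by
    rw [inner_linearCombination_int_left]
    refine sum_nonneg fun u hu => ?_
    obtain ⟨huS, hcu, hpu⟩ := mem_p hu
    refine mul_nonneg (by rw [hpu]; exact_mod_cast hcu.le) ?_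
    rw [real_inner_comm, inner_linearCombination_int_left]
    refine sum_nonneg fun v hv => ?_
    obtain ⟨hvS, hcv, hnv⟩ := mem_n hv
    refine mul_nonneg_of_nonpos_of_nonpos (by rw [hnv]; exact_mod_cast hcv.le)
      (hobtuse v hvS u huS ?_)
    rintro rfl
    omega
  by_contra! h
  have hle : ⟪linearCombination ℤ id p, linearCombination ℤ id c⟫ ≤ 0 := by
    rw [inner_linearCombination_int_left]
    refine sum_nonpos fun u hu => ?_
    obtain ⟨-, hcu, hpu⟩ := mem_p hu
    rw [hpu, real_inner_comm]
    exact mul_nonpos_of_nonneg_of_nonpos (by exact_mod_cast hcu.le) (h u hcu)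
  rw [← hpn, map_add, inner_add_right] at hle
  linarith [real_inner_self_pos.mpr hp]

def Finsupp.natAbsSum {α : Type*} (c : α →₀ ℤ) : ℕ := c.sum fun _ n => n.natAbs

lemma Finsupp.natAbsSum_neg {α : Type*} (c : α →₀ ℤ) : (-c).natAbsSum = c.natAbsSum := by
  simp [natAbsSum, sum_neg_index]

lemma Finsupp.natAbsSum_sub_single_lt {α : Type*} {c : α →₀ ℤ} {i : α} (hi : 0 < c i) :
    (c - single i 1).natAbsSum < c.natAbsSum := by
  classical
  have hc := add_sum_erase' c i (fun _ n => n.natAbs) fun _ => rfl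
  have hd := add_sum_erase' (c - single i 1) i (fun _ n => n.natAbs) fun _ => rfl
  have herase : (c - single i 1).erase i = c.erase i := by
    ext v
    by_cases hv : v = i <;> simp [hv, erase_ne]
  simp only [natAbsSum, ← hc, ← hd, herase, coe_sub, Pi.sub_apply, single_eq_same]
  omega

namespace IsPiSystemIn

variable {R C : Set V}

lemma inner_nonpos (hC : IsPiSystemIn R C) (hR : IsRootSystemIn R) {u v : V} (hu : u ∈ C)
    (hv : v ∈ C) (huv : u ≠ v) : ⟪u, v⟫ ≤ 0 := by
  by_contra! h
  exact hC.2.2 u hu v hv (hR.sub_mem_of_inner_pos (hC.1 hu) (hC.1 hv) h huv)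

lemma linearIndepOn_int (hC : IsPiSystemIn R C) : LinearIndepOn ℤ id C :=
  hC.2.1.restrict_scalars' ℤ

lemma le_single_of_inner_pos (hC : IsPiSystemIn R C) (hR : IsRootSystemIn R) {c : V →₀ ℤ}
    (hc : ↑c.support ⊆ C) (hr : linearCombination ℤ id c ∈ R)
    (ih : ∀ d : V →₀ ℤ, d.natAbsSum < c.natAbsSum → ↑d.support ⊆ C →
      linearCombination ℤ id d ∈ R → (∀ v, 0 ≤ d v) ∨ ∀ v, d v ≤ 0)
    {i j : V} (hci : 0 < c i) (hri : 0 < ⟪linearCombination ℤ id c, i⟫) (hcj : c j < 0) :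
    ∀ v, c v ≤ single i 1 v := by
  classical
  set d := c - single i 1
  have hiC : i ∈ C := hc (mem_support_iff.mpr hci.ne')
  have hd : ↑d.support ⊆ C := fun v hv => by
    rcases Finset.mem_union.mp (support_sub hv) with h | h
    · exact hc h
    · rwa [Finset.mem_singleton.mp (support_single_subset h)]
  have hij : i ≠ j := by rintro rfl; omega
  have hdj : d j = c j := by simp [d, hij]
  have hdr : linearCombination ℤ id d = linearCombination ℤ id c - i := by simp [d]
  have hne : linearCombination ℤ id c ≠ i := fun h => by
    have hd0 := linearIndepOn_iff.mp hC.linearIndepOn_int d hd (by rw [hdr, h, sub_self])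
    rw [hd0, coe_zero, Pi.zero_apply] at hdj
    omega
  have hdR : linearCombination ℤ id d ∈ R := hdr ▸ hR.sub_mem_of_inner_pos hr (hC.1 hiC) hri hne
  have hdneg : ∀ v, d v ≤ 0 :=
    (ih d (natAbsSum_sub_single_lt hci) hd hdR).resolve_left fun h => by have := h j; omega
  intro v
  have := hdneg v
  simp only [d, coe_sub, Pi.sub_apply] at this
  omega

theorem coeff_nonneg_or_nonpos (hC : IsPiSystemIn R C) (hR : IsRootSystemIn R) (c : V →₀ ℤ)
    (hc : ↑c.support ⊆ C) (hr : linearCombination ℤ id c ∈ R) :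
    (∀ v, 0 ≤ c v) ∨ ∀ v, c v ≤ 0 := by
  classical
  induction hn : c.natAbsSum using Nat.strong_induction_on generalizing c with
  | _ n ih =>
  by_contra! hmixed
  obtain ⟨⟨j₀, hj₀⟩, i₀, hi₀⟩ := hmixed
  have ih' (d : V →₀ ℤ) (hd : d.natAbsSum < c.natAbsSum) (hds : ↑d.support ⊆ C)
      (hdR : linearCombination ℤ id d ∈ R) := ih _ (hn ▸ hd) d hds hdR rfl
  have hobtuse : ∀ u ∈ C, ∀ v ∈ C, u ≠ v → ⟪u, v⟫ ≤ 0 :=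
    fun _ hu _ hv => hC.inner_nonpos hR hu hv
  have hc' : ↑(-c).support ⊆ C := by rwa [support_neg]
  obtain ⟨i, hci, hri⟩ :=
    exists_pos_coeff_inner_linearCombination_pos hC.linearIndepOn_int hobtuse hc hi₀
  obtain ⟨j, hcj, hrj⟩ := exists_pos_coeff_inner_linearCombination_pos hC.linearIndepOn_int
    hobtuse hc' (i₀ := j₀) (by simpa using hj₀)
  have hle := hC.le_single_of_inner_pos hR hc hr ih' hci hri hj₀
  have hge := hC.le_single_of_inner_pos hR hc' (by rw [map_neg]; exact hR.neg_mem hr)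
    (fun d hd => ih' d (natAbsSum_neg c ▸ hd)) hcj hrj (j := i₀) (by simpa using hi₀)
  have hij : c = single i 1 - single j 1 := by
    ext v
    have h₁ := hle v
    have h₂ := hge v
    simp only [coe_neg, Pi.neg_apply, coe_sub, Pi.sub_apply, single_apply] at h₁ h₂ hcj ⊢
    split_ifs at h₁ h₂ ⊢ <;> subst_vars <;> omega
  refine hC.2.2 i (hc (mem_support_iff.mpr hci.ne')) j (hc' (mem_support_iff.mpr hcj.ne')) ?_
  simpa [hij] using hr

end IsPiSystemIn

omit [InnerProductSpace ℝ V] in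
lemma subset_zClosure {R C : Set V} (hCR : C ⊆ R) : C ⊆ zClosure R C :=
  fun _ hx => ⟨hCR hx, Submodule.subset_span hx⟩

lemma span_zClosure {R C : Set V} (hCR : C ⊆ R) :
    Submodule.span ℝ (zClosure R C) = Submodule.span ℝ C :=
  le_antisymm (Submodule.span_le.mpr fun _ hx => Submodule.span_subset_span ℤ ℝ C hx.2)
    (Submodule.span_mono (subset_zClosure hCR))

lemma IsPiSystemIn.isBaseOf_zClosure {R C : Set V} (hC : IsPiSystemIn R C)
    (hR : IsRootSystemIn R) : IsBaseOf (zClosure R C) C := by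
  refine ⟨subset_zClosure hC.1, hC.2.1, (span_zClosure hC.1).symm, fun r hr => ?_⟩
  obtain ⟨c, hc, rfl⟩ := Submodule.mem_span_set.mp hr.2
  exact ⟨c, hc, rfl, hC.coeff_nonneg_or_nonpos hR c hc hr.1⟩

end

/-- If `C` is a π-system in a root system `R`, then `[C]` is a root
system in the span of `C` having `C` as a base. -/
theorem zClosure_of_piSystem_isRootSystem (R C : Set V)
    (hR : IsRootSystem R) (hC : IsPiSystemIn R C) :
    IsRootSystemIn (zClosure R C) ∧
    Submodule.span ℝ (zClosure R C) = Submodule.span ℝ C ∧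
    IsBaseOf (zClosure R C) C :=
  ⟨hR.1.zClosure C, span_zClosure hC.1, hC.isBaseOf_zClosure hR.1⟩
end

section
/- In the root system B_n (n ≥ 4) realized as {±e_i ± e_j : i < j} ∪ {±e_i} in ℝⁿ, the set C = {e_3 − e_2, e_2 − e_1, e_1 + e_2} (a π-system of type A_3, with (r_1 + 2r_2 + r_3)/2 = e_3 being a root) cannot be extended to a base of B_n. -/
open scoped RealInnerProductSpace

variable {V : Type*} [NormedAddCommGroup V] [InnerProductSpace ℝ V] [FiniteDimensional ℝ V]

/-- The standard basis vector `e_i` of `ℝⁿ`. -/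
noncomputable def ee (n : ℕ) (i : Fin n) : EuclideanSpace ℝ (Fin n) :=
  EuclideanSpace.single i (1 : ℝ)

/-- The root system `B_n = {±e_i ± e_j : i ≠ j} ∪ {±e_i}`. -/
noncomputable def BnRoots (n : ℕ) : Set (EuclideanSpace ℝ (Fin n)) :=
  {v | (∃ i j : Fin n, i ≠ j ∧ ∃ s t : ℝ, (s = 1 ∨ s = -1) ∧ (t = 1 ∨ t = -1) ∧
      v = s • ee n i + t • ee n j) ∨ (∃ i : Fin n, v = ee n i ∨ v = -ee n i)}

/-- The root system `C_n = {±e_i ± e_j : i ≠ j} ∪ {±2e_i}`. -/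
noncomputable def CnRoots (n : ℕ) : Set (EuclideanSpace ℝ (Fin n)) :=
  {v | (∃ i j : Fin n, i ≠ j ∧ ∃ s t : ℝ, (s = 1 ∨ s = -1) ∧ (t = 1 ∨ t = -1) ∧
      v = s • ee n i + t • ee n j) ∨
    (∃ i : Fin n, v = (2 : ℝ) • ee n i ∨ v = -((2 : ℝ) • ee n i))}

/-- The root system `D_n = {±e_i ± e_j : i ≠ j}`. -/
noncomputable def DnRoots (n : ℕ) : Set (EuclideanSpace ℝ (Fin n)) :=
  {v | ∃ i j : Fin n, i ≠ j ∧ ∃ s t : ℝ, (s = 1 ∨ s = -1) ∧ (t = 1 ∨ t = -1) ∧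
      v = s • ee n i + t • ee n j}

open Finsupp in
theorem IsBaseOf.exists_int_eq_coeff {E : Type*} [NormedAddCommGroup E] [InnerProductSpace ℝ E]
    {R B : Set E} (hB : IsBaseOf R B) {r : E} (hr : r ∈ R) {l : E →₀ ℝ}
    (hl : l ∈ supported ℝ ℝ B) (hlr : linearCombination ℝ id l = r) (v : E) :
    ∃ k : ℤ, (k : ℝ) = l v := by
  obtain ⟨-, hli, -, hint⟩ := hB
  obtain ⟨c, hc, rfl, -⟩ := hint r hr
  set c' := c.mapRange (Int.cast : ℤ → ℝ) Int.cast_zero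
  have hc'l : linearCombination ℝ id c' = linearCombination ℝ id l := by
    rw [hlr, linearCombination_apply, sum_mapRange_index (by simp)]
    exact sum_congr fun v _ => by simp [Int.cast_smul_eq_zsmul]
  have hc' : c' ∈ supported ℝ ℝ B :=
    supported_mono hc (by simpa [mem_supported] using support_mapRange)
  have hc'_eq : c' = l :=
    linearIndepOn_iffₛ.1 (linearIndependent_subtype_iff.1 hli) _ hc' _ hl hc'l
  exact ⟨c v, by rw [← hc'_eq]; rfl⟩

open Finsupp in
/-- In `B_n` (`n ≥ 4`), the `A_3` π-system
`C = {e_3 − e_2, e_2 − e_1, e_1 + e_2}` cannot be extended to a base of `B_n`. -/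
theorem a3_in_bn_not_extendable (n : ℕ) (hn : 4 ≤ n)
    (C : Set (EuclideanSpace ℝ (Fin n)))
    (hC : C = {ee n ⟨2, by omega⟩ - ee n ⟨1, by omega⟩,
               ee n ⟨1, by omega⟩ - ee n ⟨0, by omega⟩,
               ee n ⟨0, by omega⟩ + ee n ⟨1, by omega⟩}) :
    ¬ ∃ B : Set (EuclideanSpace ℝ (Fin n)), IsBaseOf (BnRoots n) B ∧ C ⊆ B := by
  rintro ⟨B, hB, hCB⟩
  set e := ee n
  set r₁ := e ⟨2, by omega⟩ - e ⟨1, by omega⟩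
  set r₂ := e ⟨1, by omega⟩ - e ⟨0, by omega⟩
  set r₃ := e ⟨0, by omega⟩ + e ⟨1, by omega⟩
  obtain ⟨h₁, h₂, h₃⟩ : r₁ ∈ B ∧ r₂ ∈ B ∧ r₃ ∈ B := by
    simpa [hC, Set.insert_subset_iff] using hCB
  set l := single r₁ (1 : ℝ) + single r₂ (1 / 2) + single r₃ (1 / 2)
  have hl : l ∈ supported ℝ ℝ B :=
    add_mem (add_mem (single_mem_supported ℝ _ h₁) (single_mem_supported ℝ _ h₂))
      (single_mem_supported ℝ _ h₃)
  -- `e₃ = r₁ + (r₂ + r₃) / 2` is a root, but not an integer combination of `r₁, r₂, r₃`.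
  have hlr : linearCombination ℝ id l = e ⟨2, by omega⟩ := by
    simp only [l, map_add, linearCombination_single, id, r₁, r₂, r₃]
    module
  obtain ⟨k, hk⟩ := hB.exists_int_eq_coeff (Or.inr ⟨_, Or.inl rfl⟩) hl hlr r₂
  have hcoord : ∀ {v w : EuclideanSpace ℝ (Fin n)}, v ⟨0, by omega⟩ ≠ w ⟨0, by omega⟩ → v ≠ w :=
    fun h hvw => h (by rw [hvw])
  have h₁₂ : r₁ ≠ r₂ := hcoord (by simp [r₁, r₂, e, ee])
  have h₃₂ : r₃ ≠ r₂ := hcoord (by simp [r₃, r₂, e, ee]; norm_num)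
  rw [Finsupp.add_apply, Finsupp.add_apply, single_eq_of_ne' h₁₂, single_eq_same,
    single_eq_of_ne' h₃₂, zero_add, add_zero] at hk
  have hk₂ : (2 * k : ℤ) = 1 := by exact_mod_cast (by linarith : (2 * k : ℝ) = 1)
  omega
end

section
/- Let C = {r_1, r_2, r_3} be a π-system of type A_3 in B_n (so ⟨r_1,r_2⟩ < 0, ⟨r_2,r_3⟩ < 0, ⟨r_1,r_3⟩ = 0, all r_i long roots). If (r_1 + 2r_2 + r_3)/2 is not a root of B_n, then every root of B_n lying in the span of C is a ℤ-linear combination of r_1, r_2, r_3. -/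
open scoped RealInnerProductSpace

variable {V : Type*} [NormedAddCommGroup V] [InnerProductSpace ℝ V] [FiniteDimensional ℝ V]

/-
Write `r = x r₁ + y r₂ + z r₃`. Integrality forces the Gram matrix of the `rᵢ` to be the Cartan
matrix of `A₃`, so the integers `a, b, c = ⟪r, rᵢ⟫` determine `x, y, z`, and
`4⟪r, r⟫ = 2(a + c)² + (a - c)² + 4b(a + b + c)`. As `⟪r, r⟫` is an integer, `a ≡ c (mod 2)`, which
puts `r` either in the `ℤ`-span of the `rᵢ` or in its translate by `ω = (r₁ + 2r₂ + r₃)/2`. In the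
second case `ω` is an integer vector of norm `1`, hence `±eᵢ`, a root of `B_n`.
-/

section A3

variable {E : Type*} [NormedAddCommGroup E] [InnerProductSpace ℝ E]

def IsIntegralLattice (Λ : AddSubgroup E) : Prop :=
  ∀ u ∈ Λ, ∀ v ∈ Λ, ∃ k : ℤ, ⟪u, v⟫ = k

structure IsA3Gram (r₁ r₂ r₃ : E) : Prop where
  inner₁₁ : ⟪r₁, r₁⟫ = 2
  inner₂₂ : ⟪r₂, r₂⟫ = 2
  inner₃₃ : ⟪r₃, r₃⟫ = 2
  inner₁₂ : ⟪r₁, r₂⟫ = -1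
  inner₂₃ : ⟪r₂, r₃⟫ = -1
  inner₁₃ : ⟪r₁, r₃⟫ = 0

/-- The fundamental weight `ω₂` of the `A₃` lattice spanned by `r₁, r₂, r₃`. -/
noncomputable def fundWeight₂ (r₁ r₂ r₃ : E) : E :=
  (1 / 2 : ℝ) • (r₁ + (2 : ℝ) • r₂ + r₃)

theorem inner_eq_neg_one_of_inner_self_eq_two {u v : E} (hu : ⟪u, u⟫ = 2) (hv : ⟪v, v⟫ = 2)
    (hint : ∃ k : ℤ, ⟪u, v⟫ = k) (hneg : ⟪u, v⟫ < 0) (hne : u + v ≠ 0) : ⟪u, v⟫ = -1 := by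
  obtain ⟨k, hk⟩ := hint
  have hpos : 0 < ⟪u + v, u + v⟫ := real_inner_self_pos.mpr hne
  rw [real_inner_add_add_self, hu, hv, hk] at hpos
  rw [hk] at hneg ⊢
  have hlo : -2 < k := by exact_mod_cast (by linarith : (-2 : ℝ) < k)
  have hhi : k < 0 := by exact_mod_cast hneg
  obtain rfl : k = -1 := by omega
  norm_num

namespace IsA3Gram

variable {r₁ r₂ r₃ : E}

theorem of_inner_neg (hl₁ : ⟪r₁, r₁⟫ = 2) (hl₂ : ⟪r₂, r₂⟫ = 2) (hl₃ : ⟪r₃, r₃⟫ = 2)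
    (h₁₂ : ⟪r₁, r₂⟫ < 0) (h₂₃ : ⟪r₂, r₃⟫ < 0) (h₁₃ : ⟪r₁, r₃⟫ = 0)
    (hz₁₂ : ∃ k : ℤ, ⟪r₁, r₂⟫ = k) (hz₂₃ : ∃ k : ℤ, ⟪r₂, r₃⟫ = k) : IsA3Gram r₁ r₂ r₃ where
  inner₁₁ := hl₁
  inner₂₂ := hl₂
  inner₃₃ := hl₃
  inner₁₂ := inner_eq_neg_one_of_inner_self_eq_two hl₁ hl₂ hz₁₂ h₁₂ fun h => by
    rw [eq_neg_of_add_eq_zero_right h, inner_neg_left, h₁₃, neg_zero] at h₂₃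
    exact h₂₃.false
  inner₂₃ := inner_eq_neg_one_of_inner_self_eq_two hl₂ hl₃ hz₂₃ h₂₃ fun h => by
    rw [eq_neg_of_add_eq_zero_right h, inner_neg_right, neg_eq_zero] at h₁₃
    exact h₁₂.ne h₁₃
  inner₁₃ := h₁₃

theorem inner_lincomb (hA : IsA3Gram r₁ r₂ r₃) (x y z : ℝ) :
    ⟪x • r₁ + y • r₂ + z • r₃, r₁⟫ = 2 * x - y ∧
    ⟪x • r₁ + y • r₂ + z • r₃, r₂⟫ = -x + 2 * y - z ∧
    ⟪x • r₁ + y • r₂ + z • r₃, r₃⟫ = -y + 2 * z := by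
  simp only [inner_add_left, real_inner_smul_left, real_inner_comm r₁ r₂, real_inner_comm r₁ r₃,
    real_inner_comm r₂ r₃, hA.inner₁₁, hA.inner₂₂, hA.inner₃₃, hA.inner₁₂, hA.inner₂₃, hA.inner₁₃]
  refine ⟨?_, ?_, ?_⟩ <;> ring

theorem inner_self_fundWeight₂ (hA : IsA3Gram r₁ r₂ r₃) :
    ⟪fundWeight₂ r₁ r₂ r₃, fundWeight₂ r₁ r₂ r₃⟫ = 1 := by
  simp only [fundWeight₂, inner_add_left, inner_add_right, real_inner_smul_left,
    real_inner_smul_right, real_inner_comm r₁ r₂, real_inner_comm r₁ r₃, real_inner_comm r₂ r₃,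
    hA.inner₁₁, hA.inner₂₂, hA.inner₃₃, hA.inner₁₂, hA.inner₂₃, hA.inner₁₃]
  norm_num

theorem exists_int_coeffs (hA : IsA3Gram r₁ r₂ r₃) {r : E}
    (hr : r ∈ Submodule.span ℝ {r₁, r₂, r₃}) (ha : ∃ a : ℤ, ⟪r, r₁⟫ = a)
    (hb : ∃ b : ℤ, ⟪r, r₂⟫ = b) (hc : ∃ c : ℤ, ⟪r, r₃⟫ = c) (hN : ∃ N : ℤ, ⟪r, r⟫ = N) :
    ∃ t m c : ℤ, r = (t : ℝ) • fundWeight₂ r₁ r₂ r₃ + (m : ℝ) • r₁ + (c : ℝ) • r₂ := by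
  obtain ⟨x, _, hyz, rfl⟩ := Submodule.mem_span_insert.mp hr
  obtain ⟨y, z, rfl⟩ := Submodule.mem_span_pair.mp hyz
  rw [← add_assoc] at ha hb hc hN
  obtain ⟨a, ha⟩ := ha
  obtain ⟨b, hb⟩ := hb
  obtain ⟨c, hc⟩ := hc
  obtain ⟨N, hN⟩ := hN
  have hN' : (N : ℝ) = x * a + y * b + z * c := by
    rw [← hN, ← ha, ← hb, ← hc]
    simp only [inner_add_right, real_inner_smul_right]
  obtain ⟨h₁, h₂, h₃⟩ := hA.inner_lincomb x y z
  rw [h₁] at ha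
  rw [h₂] at hb
  rw [h₃] at hc
  have hnorm : 4 * N = 2 * (a + c) ^ 2 + (a - c) ^ 2 + 4 * (b * (a + b + c)) := by
    have : (4 * N : ℝ) = 2 * ((a : ℝ) + c) ^ 2 + ((a : ℝ) - c) ^ 2 + 4 * (b * (a + b + c)) := by
      rw [hN', ← ha, ← hb, ← hc]; ring
    exact_mod_cast this
  obtain ⟨m, hm⟩ : Even (a - c) := by
    have : Even ((a - c) ^ 2) := ⟨2 * N - (a + c) ^ 2 - 2 * (b * (a + b + c)), by linarith⟩
    exact (Int.even_pow' two_ne_zero).mp this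
  have hm' : (a : ℝ) - c = m + m := by exact_mod_cast hm
  -- the witnesses are `2z`, `x - z` and `y - 2z`
  refine ⟨m + b + 2 * c, m, -c, ?_⟩
  unfold fundWeight₂
  push_cast
  match_scalars <;> linarith

theorem mem_span_int_or_fundWeight₂_mem (hA : IsA3Gram r₁ r₂ r₃) {Λ : AddSubgroup E}
    (hΛ : IsIntegralLattice Λ) (h₁ : r₁ ∈ Λ) (h₂ : r₂ ∈ Λ) (h₃ : r₃ ∈ Λ) {r : E} (hr : r ∈ Λ)
    (hspan : r ∈ Submodule.span ℝ {r₁, r₂, r₃}) :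
    r ∈ Submodule.span ℤ {r₁, r₂, r₃} ∨ fundWeight₂ r₁ r₂ r₃ ∈ Λ := by
  obtain ⟨t, m, c, rfl⟩ :=
    hA.exists_int_coeffs hspan (hΛ _ hr _ h₁) (hΛ _ hr _ h₂) (hΛ _ hr _ h₃) (hΛ _ hr _ hr)
  have hL : ∀ s : ℤ,
      s • (r₁ + (2 : ℤ) • r₂ + r₃) + m • r₁ + c • r₂ ∈ Submodule.span ℤ {r₁, r₂, r₃} := by
    intro s
    have m₁ : r₁ ∈ Submodule.span ℤ {r₁, r₂, r₃} := Submodule.subset_span (by simp)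
    have m₂ : r₂ ∈ Submodule.span ℤ {r₁, r₂, r₃} := Submodule.subset_span (by simp)
    have m₃ : r₃ ∈ Submodule.span ℤ {r₁, r₂, r₃} := Submodule.subset_span (by simp)
    exact add_mem (add_mem (zsmul_mem (add_mem (add_mem m₁ (zsmul_mem m₂ 2)) m₃) s)
      (zsmul_mem m₁ m)) (zsmul_mem m₂ c)
  obtain ⟨s, rfl | rfl⟩ := Int.even_or_odd' t
  · left
    convert hL s using 1
    unfold fundWeight₂
    module
  · right
    have hω : fundWeight₂ r₁ r₂ r₃ =
        ((2 * s + 1 : ℤ) : ℝ) • fundWeight₂ r₁ r₂ r₃ + (m : ℝ) • r₁ + (c : ℝ) • r₂ -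
          (s • (r₁ + (2 : ℤ) • r₂ + r₃) + m • r₁ + c • r₂) := by
      unfold fundWeight₂
      module
    rw [hω]
    exact sub_mem hr (Submodule.span_le (p := Λ.toIntSubmodule).mpr
      (by simp [Set.insert_subset_iff, h₁, h₂, h₃]) (hL s))

end IsA3Gram

end A3

def intLattice (n : ℕ) : AddSubgroup (EuclideanSpace ℝ (Fin n)) where
  carrier := {v | ∀ i, ∃ k : ℤ, v i = k}
  add_mem' {u v} hu hv i := by
    obtain ⟨k, hk⟩ := hu i
    obtain ⟨l, hl⟩ := hv i
    exact ⟨k + l, by simp [hk, hl]⟩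
  zero_mem' _ := ⟨0, by simp⟩
  neg_mem' {v} hv i := by
    obtain ⟨k, hk⟩ := hv i
    exact ⟨-k, by simp [hk]⟩

theorem ee_mem_intLattice (n : ℕ) (i : Fin n) : ee n i ∈ intLattice n := fun j =>
  ⟨if j = i then 1 else 0, by by_cases h : j = i <;> simp [ee, h]⟩

theorem BnRoots_subset_intLattice (n : ℕ) : BnRoots n ⊆ intLattice n := by
  have hsign : ∀ (s : ℝ) i, (s = 1 ∨ s = -1) → s • ee n i ∈ intLattice n := by
    rintro s i (rfl | rfl)
    · simpa using ee_mem_intLattice n i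
    · simpa using neg_mem (ee_mem_intLattice n i)
  rintro v (⟨i, j, -, s, t, hs, ht, rfl⟩ | ⟨i, rfl | rfl⟩)
  · exact add_mem (hsign s i hs) (hsign t j ht)
  · exact ee_mem_intLattice n i
  · exact neg_mem (ee_mem_intLattice n i)

theorem isIntegralLattice_intLattice (n : ℕ) : IsIntegralLattice (intLattice n) := by
  intro u hu v hv
  choose k hk using hu
  choose l hl using hv
  refine ⟨∑ i, k i * l i, ?_⟩
  simp [PiLp.inner_apply, hk, hl, mul_comm]

theorem exists_eq_ee_or_eq_neg_ee {n : ℕ} {v : EuclideanSpace ℝ (Fin n)} (hv : v ∈ intLattice n)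
    (h1 : ⟪v, v⟫ = 1) : ∃ i, v = ee n i ∨ v = -ee n i := by
  obtain ⟨i, hi⟩ : ∃ i, v i ≠ 0 := by
    by_contra! h
    have : v = 0 := by ext i; exact h i
    simp [this] at h1
  obtain ⟨k, hk⟩ := hv i
  have hk0 : k ≠ 0 := by
    rintro rfl
    simp [hk] at hi
  have hk1 : (1 : ℝ) ≤ v i ^ 2 := by
    have : (1 : ℝ) ≤ (k : ℝ) ^ 2 := by
      exact_mod_cast (one_le_sq_iff_one_le_abs k).mpr (Int.one_le_abs hk0)
    rwa [hk]
  have hrest : ⟪v - v i • ee n i, v - v i • ee n i⟫ = 1 - v i ^ 2 := by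
    simp only [inner_sub_left, inner_sub_right, real_inner_smul_left, real_inner_smul_right, h1,
      ee, EuclideanSpace.inner_single_left, EuclideanSpace.inner_single_right, Real.ringHom_apply,
      PiLp.smul_apply, PiLp.single_eq_same, smul_eq_mul, one_mul, mul_one]
    ring
  have hsq : v i ^ 2 = 1 :=
    le_antisymm (by linarith [real_inner_self_nonneg (x := v - v i • ee n i)]) hk1
  have hv_eq : v = v i • ee n i :=
    sub_eq_zero.mp (inner_self_eq_zero.mp (by rw [hrest, hsq, sub_self]))
  refine ⟨i, ?_⟩
  rcases sq_eq_one_iff.mp hsq with h | h <;> rw [hv_eq, h] <;> simp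

theorem a3_piSystem_in_bn_spans_general (n : ℕ) (r₁ r₂ r₃ : EuclideanSpace ℝ (Fin n))
    (h₁ : r₁ ∈ BnRoots n) (h₂ : r₂ ∈ BnRoots n) (h₃ : r₃ ∈ BnRoots n)
    (hl₁ : ⟪r₁, r₁⟫ = 2) (hl₂ : ⟪r₂, r₂⟫ = 2) (hl₃ : ⟪r₃, r₃⟫ = 2)
    (h₁₂ : ⟪r₁, r₂⟫ < 0) (h₂₃ : ⟪r₂, r₃⟫ < 0) (h₁₃ : ⟪r₁, r₃⟫ = 0)
    (hnot : (1/2 : ℝ) • (r₁ + (2 : ℝ) • r₂ + r₃) ∉ BnRoots n) :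
    ∀ r ∈ BnRoots n,
      r ∈ Submodule.span ℝ ({r₁, r₂, r₃} : Set (EuclideanSpace ℝ (Fin n))) →
      r ∈ (Submodule.span ℤ ({r₁, r₂, r₃} : Set (EuclideanSpace ℝ (Fin n))) :
            Set (EuclideanSpace ℝ (Fin n))) := by
  have hΛ := isIntegralLattice_intLattice n
  have m₁ := BnRoots_subset_intLattice n h₁
  have m₂ := BnRoots_subset_intLattice n h₂
  have m₃ := BnRoots_subset_intLattice n h₃
  have hA : IsA3Gram r₁ r₂ r₃ :=
    .of_inner_neg hl₁ hl₂ hl₃ h₁₂ h₂₃ h₁₃ (hΛ _ m₁ _ m₂) (hΛ _ m₂ _ m₃)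
  intro r hr hspan
  refine (hA.mem_span_int_or_fundWeight₂_mem hΛ m₁ m₂ m₃ (BnRoots_subset_intLattice n hr)
    hspan).resolve_right fun hω => hnot ?_
  exact Or.inr (exists_eq_ee_or_eq_neg_ee hω hA.inner_self_fundWeight₂)

/-- If `{r₁, r₂, r₃}` is an `A_3` π-system of long roots in `B_n` and
`(r₁ + 2r₂ + r₃)/2` is not a root, then every root in the span of the `rᵢ` is a
`ℤ`-linear combination of them. -/
theorem a3_piSystem_in_bn_spans (n : ℕ) (r₁ r₂ r₃ : EuclideanSpace ℝ (Fin n))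
    (h₁ : r₁ ∈ BnRoots n) (h₂ : r₂ ∈ BnRoots n) (h₃ : r₃ ∈ BnRoots n)
    (hl₁ : ⟪r₁, r₁⟫ = 2) (hl₂ : ⟪r₂, r₂⟫ = 2) (hl₃ : ⟪r₃, r₃⟫ = 2)
    (h₁₂ : ⟪r₁, r₂⟫ < 0) (h₂₃ : ⟪r₂, r₃⟫ < 0) (h₁₃ : ⟪r₁, r₃⟫ = 0)
    (hpi : IsPiSystemIn (BnRoots n) {r₁, r₂, r₃})
    (hnot : (1/2 : ℝ) • (r₁ + (2 : ℝ) • r₂ + r₃) ∉ BnRoots n) :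
    ∀ r ∈ BnRoots n,
      r ∈ Submodule.span ℝ ({r₁, r₂, r₃} : Set (EuclideanSpace ℝ (Fin n))) →
      r ∈ (Submodule.span ℤ ({r₁, r₂, r₃} : Set (EuclideanSpace ℝ (Fin n))) :
            Set (EuclideanSpace ℝ (Fin n))) :=
  a3_piSystem_in_bn_spans_general n r₁ r₂ r₃ h₁ h₂ h₃ hl₁ hl₂ hl₃ h₁₂ h₂₃ h₁₃ hnot
end
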